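/- (Ahlfors–Schwarz lemma for holomorphic maps into a domain with a negatively curved metric.) Let Ω ⊆ ℂ be open, let λ : Ω → ℝ be a positive, twice continuously differentiable function satisfying Δ(log λ)(w) ≥ 4·λ(w)² for all w ∈ Ω (i.e. the conformal metric λ|dw| on Ω has Gauss curvature at most −1), and let f : 𝔻 → Ω be holomorphic. Then for every z ∈ 𝔻, λ(f(z))·|f'(z)| ≤ 1/(1 − |z|²); in particular f is distance-decreasing from the Poincaré metric on 𝔻 to the metric λ|dw| on Ω. -/

import Mathlib

/-!
Ahlfors' argument. The pullback density `σ = λ(f)|f'|` is ultrahyperbolic: where `σ > 0`,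
`Δ log σ = |f'|² (Δ log λ)∘f + Δ log |f'| ≥ 4σ²`, since `log |f'|` is harmonic. On the disc of
radius `r < 1` the Poincaré density `ρ_r = r / (r² - |z|²)` satisfies `Δ log ρ_r = 4ρ_r²`.
The product `σ (r² - |z|²)` vanishes on `|z| = r`, so if it exceeds `r` anywhere it has an
interior maximum, where `log (σ / ρ_r)` has a local maximum and
`0 ≥ Δ log (σ / ρ_r) ≥ 4σ² - 4ρ_r²`, i.e. `σ ≤ ρ_r` there, a contradiction.
Hence `σ ≤ ρ_r` on the disc of radius `r`; let `r → 1`.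
-/

open Complex

/-- The standard Laplacian on `ℝ² ≅ ℂ`: `Δu = ∂²u/∂x² + ∂²u/∂y²`, written as the sum of
second directional derivatives in the directions `1` and `i`. -/
noncomputable def laplacian (u : ℂ → ℝ) (z : ℂ) : ℝ :=
  fderiv ℝ (fun w : ℂ => fderiv ℝ u w 1) z 1 +
    fderiv ℝ (fun w : ℂ => fderiv ℝ u w Complex.I) z Complex.I

open Filter Topology Metric
open scoped Laplacian

theorem ContDiffAt.differentiableAt_fderiv {E F : Type*} [NormedAddCommGroup E] [NormedSpace ℝ E]
    [NormedAddCommGroup F] [NormedSpace ℝ F] {u : E → F} {x : E} (hu : ContDiffAt ℝ 2 u x) :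
    DifferentiableAt ℝ (fderiv ℝ u) x :=
  (hu.fderiv_right (m := 1) le_rfl).differentiableAt one_ne_zero

theorem InnerProductSpace.laplacian_complex_eq_fderiv_fderiv {F : Type*} [NormedAddCommGroup F]
    [NormedSpace ℝ F] (u : ℂ → F) (z : ℂ) :
    Δ u z = fderiv ℝ (fderiv ℝ u) z 1 1 + fderiv ℝ (fderiv ℝ u) z I I := by
  simp [InnerProductSpace.laplacian_eq_iteratedFDeriv_complexPlane, iteratedFDeriv_two_apply]

theorem laplacian_eq_innerProductSpace_laplacian {u : ℂ → ℝ} {z : ℂ}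
    (hu : DifferentiableAt ℝ (fderiv ℝ u) z) :
    laplacian u z = Δ u z := by
  simp [laplacian, InnerProductSpace.laplacian_complex_eq_fderiv_fderiv,
    fderiv_clm_apply hu (differentiableAt_const _)]

/-- If `f'' a > 0`, the second derivative test makes `a` also a local minimum, so `f` is constant
near `a` and `f'' a = 0`. -/
theorem IsLocalMax.deriv_deriv_nonpos {f : ℝ → ℝ} {a : ℝ} (h : IsLocalMax f a)
    (hc : ContinuousAt f a) : deriv (deriv f) a ≤ 0 := by
  by_contra! hpos
  have hmin := isLocalMin_of_deriv_deriv_pos hpos h.deriv_eq_zero hc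
  have hconst : f =ᶠ[𝓝 a] fun _ => f a := by
    filter_upwards [h, hmin] with x hx₁ hx₂ using le_antisymm hx₁ hx₂
  have hderiv : deriv f =ᶠ[𝓝 a] fun _ => 0 := by
    filter_upwards [hconst.eventuallyEq_nhds] with x hx using by rw [hx.deriv_eq]; simp
  simp [hderiv.deriv_eq] at hpos

section
variable {E F : Type*} [NormedAddCommGroup E] [NormedSpace ℝ E] [NormedAddCommGroup F]
  [NormedSpace ℝ F]

theorem ContDiffAt.deriv_deriv_comp_add_smul {u : E → F} {x : E} (hu : ContDiffAt ℝ 2 u x) (v : E) :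
    deriv (deriv fun t : ℝ => u (x + t • v)) 0 = fderiv ℝ (fderiv ℝ u) x v v := by
  have hline : ∀ t : ℝ, HasDerivAt (fun t : ℝ => x + t • v) v t := fun t => by
    simpa using ((hasDerivAt_id t).smul_const v).const_add x
  have htend : Tendsto (fun t : ℝ => x + t • v) (𝓝 0) (𝓝 x) := by
    simpa using (hline 0).continuousAt.tendsto
  have hdiff : ∀ᶠ y in 𝓝 x, DifferentiableAt ℝ u y :=
    (hu.eventually (by simp)).mono fun y hy => hy.differentiableAt (by simp)
  have hderiv : deriv (fun t : ℝ => u (x + t • v)) =ᶠ[𝓝 0]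
      fun t => fderiv ℝ u (x + t • v) v := by
    filter_upwards [htend.eventually hdiff] with t ht
    exact (ht.hasFDerivAt.comp_hasDerivAt t (hline t)).deriv
  have hderiv' := (hu.differentiableAt_fderiv.hasFDerivAt.clm_apply
    (hasFDerivAt_const v x)).comp_hasDerivAt_of_eq (0 : ℝ) (hline 0) (by simp)
  rw [hderiv.deriv_eq]
  simpa [Function.comp_def] using hderiv'.deriv

theorem IsLocalMax.fderiv_fderiv_apply_self_nonpos {u : E → ℝ} {x : E} (h : IsLocalMax u x)
    (hu : ContDiffAt ℝ 2 u x) (v : E) : fderiv ℝ (fderiv ℝ u) x v v ≤ 0 := by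
  rw [← hu.deriv_deriv_comp_add_smul]
  have hcont : ContinuousAt (fun t : ℝ => x + t • v) 0 := by fun_prop
  exact IsLocalMax.deriv_deriv_nonpos (IsLocalMax.comp_continuous (by simpa using h) hcont)
    (hu.continuousAt.comp_of_eq hcont (by simp))
end

theorem IsLocalMax.laplacian_nonpos {E : Type*} [NormedAddCommGroup E] [InnerProductSpace ℝ E]
    [FiniteDimensional ℝ E] {u : E → ℝ} {x : E} (h : IsLocalMax u x) (hu : ContDiffAt ℝ 2 u x) :
    Δ u x ≤ 0 := by
  rw [InnerProductSpace.laplacian_eq_iteratedFDeriv_stdOrthonormalBasis]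
  exact Finset.sum_nonpos fun i _ => by
    simpa [iteratedFDeriv_two_apply] using h.fderiv_fderiv_apply_self_nonpos hu _

theorem ContinuousLinearMap.apply_self_add_apply_mul_I_self {F : Type*} [NormedAddCommGroup F]
    [NormedSpace ℝ F] (B : ℂ →L[ℝ] ℂ →L[ℝ] F) (hB : B 1 I = B I 1) (a : ℂ) :
    B a a + B (a * I) (a * I) = ‖a‖ ^ 2 • (B 1 1 + B I I) := by
  obtain ⟨x, y, rfl⟩ : ∃ x y : ℝ, a = x • (1 : ℂ) + y • I := ⟨a.re, a.im, by simp⟩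
  have hmul : (x • (1 : ℂ) + y • I) * I = (-y) • (1 : ℂ) + x • I := by
    simp [Complex.ext_iff]
  have hnorm : ‖x • (1 : ℂ) + y • I‖ ^ 2 = x ^ 2 + y ^ 2 := by
    rw [real_smul, real_smul, mul_one, norm_add_mul_I, Real.sq_sqrt (by positivity)]
  rw [hmul, hnorm]
  simp only [map_add, map_smul, add_apply, smul_apply, hB]
  module

section
variable {F : Type*} [NormedAddCommGroup F] [NormedSpace ℝ F]

theorem fderiv_fderiv_comp_apply_self {u : ℂ → F} {g : ℂ → ℂ} {z : ℂ}
    (hu : ContDiffAt ℝ 2 u (g z)) (hg : AnalyticAt ℂ g z) (e : ℂ) :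
    fderiv ℝ (fderiv ℝ (u ∘ g)) z e e =
      fderiv ℝ (fderiv ℝ u) (g z) (deriv g z * e) (deriv g z * e) +
        fderiv ℝ u (g z) (deriv (deriv g) z * e * e) := by
  have hg' : ∀ᶠ w in 𝓝 z, HasFDerivAt g (deriv g w • (1 : ℂ →L[ℝ] ℂ)) w :=
    hg.eventually_analyticAt.mono fun w hw => hw.differentiableAt.hasDerivAt.complexToReal_fderiv
  have hu' : ∀ᶠ w in 𝓝 z, DifferentiableAt ℝ u (g w) :=
    hg.continuousAt.eventually <|
      (hu.eventually (by simp)).mono fun y hy => hy.differentiableAt (by simp)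
  have hfderiv : fderiv ℝ (u ∘ g) =ᶠ[𝓝 z]
      fun w => (fderiv ℝ u (g w)).comp (deriv g w • (1 : ℂ →L[ℝ] ℂ)) := by
    filter_upwards [hg', hu'] with w hgw huw using (huw.hasFDerivAt.comp w hgw).fderiv
  have hDu : HasFDerivAt (fun w => fderiv ℝ u (g w))
      ((fderiv ℝ (fderiv ℝ u) (g z)).comp (deriv g z • (1 : ℂ →L[ℝ] ℂ))) z :=
    hu.differentiableAt_fderiv.hasFDerivAt.comp z hg'.self_of_nhds
  have hDg' : HasFDerivAt (fun w => deriv g w • (1 : ℂ →L[ℝ] ℂ))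
      ((deriv (deriv g) z • (1 : ℂ →L[ℝ] ℂ)).smulRight (1 : ℂ →L[ℝ] ℂ)) z :=
    hg.deriv.differentiableAt.hasDerivAt.complexToReal_fderiv.smul_const (1 : ℂ →L[ℝ] ℂ)
  rw [hfderiv.fderiv_eq, (hDu.clm_comp hDg').fderiv]
  simp [mul_comm, add_comm]

theorem laplacian_comp_analyticAt {u : ℂ → F} {g : ℂ → ℂ} {z : ℂ}
    (hu : ContDiffAt ℝ 2 u (g z)) (hg : AnalyticAt ℂ g z) :
    Δ (u ∘ g) z = ‖deriv g z‖ ^ 2 • Δ u (g z) := by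
  have hsymm := hu.isSymmSndFDerivAt (by simp)
  simp only [InnerProductSpace.laplacian_complex_eq_fderiv_fderiv,
    fderiv_fderiv_comp_apply_self hu hg, mul_one, mul_assoc, I_mul_I, mul_neg, map_neg]
  rw [← ContinuousLinearMap.apply_self_add_apply_mul_I_self _ (hsymm 1 I)]
  abel
end

noncomputable def poincareDensity (r : ℝ) (z : ℂ) : ℝ := r / (r ^ 2 - ‖z‖ ^ 2)

theorem laplacian_log_poincareDensity {r : ℝ} {z : ℂ} (hz : ‖z‖ < r) :
    Δ (fun w => Real.log (poincareDensity r w)) z = 4 * poincareDensity r z ^ 2 := by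
  set N : ℂ → ℝ := fun w => r ^ 2 - ‖w‖ ^ 2 with hNdef
  have hr : 0 < r := (norm_nonneg z).trans_lt hz
  have hNz : 0 < N z := by simp only [hNdef]; nlinarith [norm_nonneg z]
  have hN' : ∀ w, HasFDerivAt N (-(2 • innerSL ℝ w)) w := fun w =>
    (hasStrictFDerivAt_norm_sq w).hasFDerivAt.const_sub _
  have hNpos : ∀ᶠ w in 𝓝 z, 0 < N w :=
    (hN' z).continuousAt.eventually (eventually_gt_nhds hNz)
  have hlog : (fun w => Real.log (poincareDensity r w)) =ᶠ[𝓝 z]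
      fun w => Real.log r - Real.log (N w) := by
    filter_upwards [hNpos] with w hw
    rw [poincareDensity, Real.log_div hr.ne' hw.ne']
  have hD : fderiv ℝ (fun w => Real.log r - Real.log (N w)) =ᶠ[𝓝 z]
      fun w => (N w)⁻¹ • (2 : ℝ) • innerSL ℝ w := by
    filter_upwards [hNpos] with w hw
    rw [((hN' w).log hw.ne').const_sub _ |>.fderiv]
    ext e; simp [mul_add]
  have hDD : HasFDerivAt (fun w => (N w)⁻¹ • (2 : ℝ) • innerSL ℝ w) _ z := HasFDerivAt.smul
    ((hasDerivAt_inv hNz.ne').comp_hasFDerivAt z (hN' z))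
    (((innerSL ℝ : ℂ →L[ℝ] ℂ →L[ℝ] ℝ).hasFDerivAt (x := z)).const_smul (2 : ℝ))
  have hHess : ∀ e, fderiv ℝ (fderiv ℝ fun w => Real.log r - Real.log (N w)) z e e
      = 2 * ‖e‖ ^ 2 / N z + 4 * inner ℝ z e ^ 2 / N z ^ 2 := by
    intro e
    rw [hD.fderiv_eq, hDD.fderiv]
    simp only [Function.comp_apply, smul_neg, neg_smul, neg_neg, add_apply, smul_apply,
      ContinuousLinearMap.smulRight_apply, nsmul_eq_mul, Nat.cast_ofNat, smul_eq_mul]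
    rw [innerSL_apply_apply, innerSL_apply_apply, real_inner_self_eq_norm_sq]
    ring
  rw [(InnerProductSpace.laplacian_congr_nhds hlog).eq_of_nhds,
    InnerProductSpace.laplacian_complex_eq_fderiv_fderiv, hHess, hHess]
  have hnorm : ‖z‖ ^ 2 = z.re ^ 2 + z.im ^ 2 := by rw [← normSq_eq_norm_sq, normSq_apply]; ring
  simp only [norm_one, norm_I, Complex.inner, one_pow, mul_one, mul_re, conj_re, conj_im, I_re,
    I_im, one_re, one_im, zero_mul, zero_sub, neg_neg, mul_neg, poincareDensity, hNdef] at hNz ⊢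
  field_simp
  rw [hnorm]
  ring

/-- Ahlfors' ultrahyperbolic densities, in the `C²` form: the metric `σ |dz|` has Gauss curvature
at most `-1` wherever `σ` is positive. -/
def IsUltrahyperbolicOn (σ : ℂ → ℝ) (s : Set ℂ) : Prop :=
  ContinuousOn σ s ∧
    ∀ z ∈ s, 0 < σ z → ContDiffAt ℝ 2 σ z ∧ 4 * σ z ^ 2 ≤ Δ (fun w => Real.log (σ w)) z

theorem IsUltrahyperbolicOn.mono {σ : ℂ → ℝ} {s t : Set ℂ} (hσ : IsUltrahyperbolicOn σ s)
    (hts : t ⊆ s) : IsUltrahyperbolicOn σ t :=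
  ⟨hσ.1.mono hts, fun z hz => hσ.2 z (hts hz)⟩

theorem le_poincareDensity_of_isLocalMax {σ : ℂ → ℝ} {r : ℝ} {z : ℂ} (hσ : ContDiffAt ℝ 2 σ z)
    (hpos : 0 < σ z) (hcurv : 4 * σ z ^ 2 ≤ Δ (fun w => Real.log (σ w)) z) (hz : ‖z‖ < r)
    (hmax : IsLocalMax (fun w => σ w * (r ^ 2 - ‖w‖ ^ 2)) z) :
    σ z ≤ poincareDensity r z := by
  have hr : 0 < r := (norm_nonneg z).trans_lt hz
  have hN : ∀ {w : ℂ}, ‖w‖ < r → 0 < r ^ 2 - ‖w‖ ^ 2 := fun {w} hw => by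
    nlinarith [norm_nonneg w]
  have hρ : 0 < poincareDensity r z := div_pos hr (hN hz)
  have hlogσ : ContDiffAt ℝ 2 (fun w => Real.log (σ w)) z := hσ.log hpos.ne'
  have hlogρ : ContDiffAt ℝ 2 (fun w => Real.log (poincareDensity r w)) z :=
    (contDiffAt_const.div (contDiff_const.sub (contDiff_norm_sq ℝ)).contDiffAt
      (hN hz).ne').log hρ.ne'
  have hlog_ratio : ∀ {w : ℂ}, 0 < σ w → ‖w‖ < r →
      Real.log (σ w) - Real.log (poincareDensity r w) =
        Real.log (σ w * (r ^ 2 - ‖w‖ ^ 2)) - Real.log r := fun hσw hw => by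
    rw [poincareDensity, Real.log_div hr.ne' (hN hw).ne', Real.log_mul hσw.ne' (hN hw).ne']
    ring
  have hmax' : IsLocalMax (fun w => Real.log (σ w) - Real.log (poincareDensity r w)) z := by
    filter_upwards [hmax, hσ.continuousAt.eventually (lt_mem_nhds hpos),
      continuous_norm.continuousAt.eventually (gt_mem_nhds hz)] with w hw hσw hrw
    rw [hlog_ratio hσw hrw, hlog_ratio hpos hz]
    exact sub_le_sub_right (Real.log_le_log (mul_pos hσw (hN hrw)) hw) _
  have hΔ : Δ ((fun w => Real.log (σ w)) - fun w => Real.log (poincareDensity r w)) z ≤ 0 :=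
    hmax'.laplacian_nonpos (hlogσ.sub hlogρ)
  rw [hlogσ.laplacian_sub hlogρ, laplacian_log_poincareDensity hz] at hΔ
  exact (pow_le_pow_iff_left₀ hpos.le hρ.le two_ne_zero).1 (by linarith)

theorem IsUltrahyperbolicOn.le_poincareDensity {σ : ℂ → ℝ} {r : ℝ}
    (hσ : IsUltrahyperbolicOn σ (closedBall 0 r)) {z : ℂ} (hz : z ∈ ball 0 r) :
    σ z ≤ poincareDensity r z := by
  rw [mem_ball_zero_iff] at hz
  have hr : 0 < r := (norm_nonneg z).trans_lt hz
  set h : ℂ → ℝ := fun w => σ w * (r ^ 2 - ‖w‖ ^ 2)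
  obtain ⟨z₁, hz₁, hmax⟩ := (isCompact_closedBall (0 : ℂ) r).exists_isMaxOn (f := h)
    (nonempty_closedBall.2 hr.le) (hσ.1.mul (by fun_prop))
  rw [mem_closedBall_zero_iff] at hz₁
  suffices h z₁ ≤ r by
    rw [poincareDensity, le_div_iff₀ (by nlinarith [norm_nonneg z])]
    exact (hmax (mem_closedBall_zero_iff.2 hz.le)).trans this
  by_contra! hlt
  have hz₁' : ‖z₁‖ < r := hz₁.lt_of_ne fun heq => by simp [h, heq] at hlt; linarith
  have hσ₁ : 0 < σ z₁ := pos_of_mul_pos_left (hr.trans hlt) (by nlinarith [norm_nonneg z₁])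
  obtain ⟨hC2, hcurv⟩ := hσ.2 z₁ (mem_closedBall_zero_iff.2 hz₁) hσ₁
  have hle := le_poincareDensity_of_isLocalMax hC2 hσ₁ hcurv hz₁'
    (hmax.isLocalMax (closedBall_mem_nhds_of_mem (mem_ball_zero_iff.2 hz₁')))
  rw [poincareDensity, le_div_iff₀ (by nlinarith [norm_nonneg z₁])] at hle
  exact hlt.not_ge hle

theorem IsUltrahyperbolicOn.le_poincareDensity_one {σ : ℂ → ℝ}
    (hσ : IsUltrahyperbolicOn σ (ball 0 1)) {z : ℂ} (hz : z ∈ ball 0 1) :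
    σ z ≤ poincareDensity 1 z := by
  rw [mem_ball_zero_iff] at hz
  have hlim : Tendsto (fun r => poincareDensity r z) (𝓝[<] 1) (𝓝 (poincareDensity 1 z)) := by
    refine (ContinuousAt.div continuousAt_id (by fun_prop) ?_).tendsto.mono_left
      nhdsWithin_le_nhds
    nlinarith [norm_nonneg z]
  refine ge_of_tendsto hlim ?_
  filter_upwards [Ioo_mem_nhdsLT hz] with r hr
  exact (hσ.mono (closedBall_subset_ball hr.2)).le_poincareDensity (mem_ball_zero_iff.2 hr.1)

theorem IsUltrahyperbolicOn.comp {lam : ℂ → ℝ} {Ω U : Set ℂ} (hlam : IsUltrahyperbolicOn lam Ω)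
    {f : ℂ → ℂ} (hU : IsOpen U) (hf : DifferentiableOn ℂ f U) (hmaps : Set.MapsTo f U Ω) :
    IsUltrahyperbolicOn (fun z => lam (f z) * ‖deriv f z‖) U := by
  have hfa : AnalyticOnNhd ℂ f U := hf.analyticOnNhd hU
  refine ⟨(hlam.1.comp hf.continuousOn hmaps).mul
    (continuous_norm.comp_continuousOn hfa.deriv.continuousOn), fun z hz hpos => ?_⟩
  have hlam_pos : 0 < lam (f z) := pos_of_mul_pos_left hpos (norm_nonneg _)
  have hf' : deriv f z ≠ 0 := norm_pos_iff.1 (pos_of_mul_pos_right hpos hlam_pos.le)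
  obtain ⟨hC2, hcurv⟩ := hlam.2 (f z) (hmaps hz) hlam_pos
  have hlamf : ContDiffAt ℝ 2 (fun w => lam (f w)) z :=
    hC2.comp z ((hfa z hz).contDiffAt.restrict_scalars ℝ)
  have hnorm : ContDiffAt ℝ 2 (fun w => ‖deriv f w‖) z :=
    (contDiffAt_norm ℝ hf').comp z ((hfa z hz).deriv.contDiffAt.restrict_scalars ℝ)
  refine ⟨hlamf.mul hnorm, ?_⟩
  have hloglam : ContDiffAt ℝ 2 (fun x => Real.log (lam x)) (f z) := hC2.log hlam_pos.ne'
  have hharm := (hfa z hz).deriv.harmonicAt_log_norm hf'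
  have hsplit : (fun w => Real.log (lam (f w) * ‖deriv f w‖)) =ᶠ[𝓝 z]
      (fun x => Real.log (lam x)) ∘ f + fun w => Real.log ‖deriv f w‖ := by
    filter_upwards [(hlamf.mul hnorm).continuousAt.eventually (lt_mem_nhds hpos)] with w hw
    exact Real.log_mul (left_ne_zero_of_mul hw.ne') (right_ne_zero_of_mul hw.ne')
  rw [(InnerProductSpace.laplacian_congr_nhds hsplit).eq_of_nhds,
    (hloglam.comp z ((hfa z hz).contDiffAt.restrict_scalars ℝ)).laplacian_add hharm.1,
    laplacian_comp_analyticAt hloglam (hfa z hz), hharm.2.eq_of_nhds]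
  calc 4 * (lam (f z) * ‖deriv f z‖) ^ 2 = ‖deriv f z‖ ^ 2 * (4 * lam (f z) ^ 2) := by ring
    _ ≤ ‖deriv f z‖ ^ 2 * Δ (fun x => Real.log (lam x)) (f z) := by gcongr
    _ = _ := by simp

theorem ahlfors_schwarz_general (Ω : Set ℂ) (hΩ : IsOpen Ω) (lam : ℂ → ℝ)
    (hsmooth : ContDiffOn ℝ 2 lam Ω)
    (hcurv : ∀ w ∈ Ω, 4 * lam w ^ 2 ≤ laplacian (fun x : ℂ => Real.log (lam x)) w)
    (f : ℂ → ℂ) (hf : DifferentiableOn ℂ f (Metric.ball (0 : ℂ) 1))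
    (hmaps : Set.MapsTo f (Metric.ball (0 : ℂ) 1) Ω) :
    ∀ z ∈ Metric.ball (0 : ℂ) 1,
      lam (f z) * ‖deriv f z‖ ≤ 1 / (1 - ‖z‖ ^ 2) := by
  have hlam : IsUltrahyperbolicOn lam Ω := by
    refine ⟨hsmooth.continuousOn, fun w hw hpos => ?_⟩
    have hC2 := hsmooth.contDiffAt (hΩ.mem_nhds hw)
    refine ⟨hC2, ?_⟩
    rw [← laplacian_eq_innerProductSpace_laplacian (hC2.log hpos.ne').differentiableAt_fderiv]
    exact hcurv w hw
  intro z hz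
  simpa only [poincareDensity, one_pow] using
    (hlam.comp isOpen_ball hf hmaps).le_poincareDensity_one hz

/-- **Ahlfors–Schwarz lemma** for holomorphic maps into a domain carrying a conformal
metric `λ|dw|` of Gauss curvature at most `-1` (i.e. `Δ log λ ≥ 4λ²`): any holomorphic map
`f : 𝔻 → Ω` is distance-decreasing from the Poincaré metric to `λ|dw|`, i.e.
`λ(f z)·|f'(z)| ≤ 1/(1 - |z|²)`. -/
theorem ahlfors_schwarz (Ω : Set ℂ) (hΩ : IsOpen Ω) (lam : ℂ → ℝ)
    (hpos : ∀ w ∈ Ω, 0 < lam w)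
    (hsmooth : ContDiffOn ℝ 2 lam Ω)
    (hcurv : ∀ w ∈ Ω, 4 * lam w ^ 2 ≤ laplacian (fun x : ℂ => Real.log (lam x)) w)
    (f : ℂ → ℂ) (hf : DifferentiableOn ℂ f (Metric.ball (0 : ℂ) 1))
    (hmaps : Set.MapsTo f (Metric.ball (0 : ℂ) 1) Ω) :
    ∀ z ∈ Metric.ball (0 : ℂ) 1,
      lam (f z) * ‖deriv f z‖ ≤ 1 / (1 - ‖z‖ ^ 2) :=
  ahlfors_schwarz_general Ω hΩ lam hsmooth hcurv f hf hmaps
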